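/- arXiv:2605.13575 — 6 statements merged into one kernel-verified Lean document; each statement's English description precedes it below -/
import Mathlib

section
/- Let (E, μ) be a σ-finite measure space, N ≥ 1, and let s_1,…,s_N ∈ L²(E, μ; ℂ) be orthonormal. Define K(x,y) = ∑_{j=1}^N s_j(x) · conj(s_j(y)). Then ∫_{E^N} det( K(x_i, x_j) )_{i,j=1}^{N} dμ(x_1) ⋯ dμ(x_N) = N!. In particular, (1/N!) det(K(x_i,x_j)) dμ^{⊗N} is a probability measure on E^N. -/
open MeasureTheory Finset

/-- The rank-`N` projection kernel `K(x,y) = ∑_j s_j(x) conj(s_j(y))`. -/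
noncomputable def projKernel {E : Type*} {N : ℕ} (s : Fin N → E → ℂ) (x y : E) : ℂ :=
  ∑ j, s j x * (starRingEnd ℂ) (s j y)

/-- Normalization of the orthogonal (Slater determinant) ensemble:
`∫_{E^N} det(K(x_i,x_j)) dμ^N = N!`. -/
theorem stmt6 {E : Type*} [MeasurableSpace E] (μ : Measure E) [SigmaFinite μ]
    {N : ℕ} (hN : 1 ≤ N) (s : Fin N → E → ℂ) (hs : ∀ j, MemLp (s j) 2 μ)
    (horth : ∀ i j : Fin N,
      ∫ x, s i x * (starRingEnd ℂ) (s j x) ∂μ = if i = j then 1 else 0) :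
    ∫ x : Fin N → E,
        Matrix.det (Matrix.of fun i j : Fin N => projKernel s (x i) (x j))
        ∂(Measure.pi fun _ => μ)
      = (N.factorial : ℂ) := by
  classical
  letI : MeasureSpace E := ⟨μ⟩
  haveI : SigmaFinite (volume : Measure E) := ‹SigmaFinite μ›
  -- integrability of products of two L² functions
  have hconj : ∀ j, MemLp (fun x => (starRingEnd ℂ) (s j x)) 2 μ := fun j =>
    (hs j).of_le (RCLike.continuous_conj.comp_aestronglyMeasurable (hs j).1)
      (Filter.Eventually.of_forall fun x => by simp)
  have hint : ∀ i j : Fin N, Integrable (fun x => s i x * (starRingEnd ℂ) (s j x)) μ := by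
    intro i j
    have h1 : MemLp (s i • fun x => (starRingEnd ℂ) (s j x)) 1 μ :=
      (hconj j).smul (hs i) (hpqr := ⟨by norm_num [ENNReal.inv_two_add_inv_two]⟩)
    have := memLp_one_iff_integrable.mp h1
    simpa [Pi.smul_apply, smul_eq_mul, Pi.mul_def] using this
  -- constants
  set c : Equiv.Perm (Fin N) → Equiv.Perm (Fin N) → ℂ :=
    fun σ τ => ((Equiv.Perm.sign σ : ℤ) : ℂ) * ((Equiv.Perm.sign τ : ℤ) : ℂ) with hc
  -- pointwise determinant expansion
  have key : ∀ x : Fin N → E,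
      Matrix.det (Matrix.of fun i j : Fin N => projKernel s (x i) (x j))
        = ∑ σ : Equiv.Perm (Fin N), ∑ τ : Equiv.Perm (Fin N),
            c σ τ * ∏ i, (s (σ i) (x i) * (starRingEnd ℂ) (s (τ i) (x i))) := by
    intro x
    have hAB : (Matrix.of fun i j : Fin N => projKernel s (x i) (x j))
        = (Matrix.of fun i j : Fin N => s j (x i)) *
          (Matrix.of fun i j : Fin N => (starRingEnd ℂ) (s i (x j))) := by
      ext i j
      simp [projKernel, Matrix.mul_apply]
    rw [hAB, Matrix.det_mul,
      ← Matrix.det_transpose (Matrix.of fun i j : Fin N => s j (x i)),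
      Matrix.det_apply, Matrix.det_apply, Finset.sum_mul_sum]
    refine Finset.sum_congr rfl fun σ _ => Finset.sum_congr rfl fun τ _ => ?_
    simp only [Matrix.transpose_apply, Matrix.of_apply, Units.smul_def, zsmul_eq_mul, hc,
      Finset.prod_mul_distrib]
    ring
  simp_rw [key]
  -- Fubini for products over pi measures
  have pi_int : ∀ f : Fin N → E → ℂ,
      ∫ x : Fin N → E, ∏ i, f i (x i) ∂(Measure.pi fun _ => μ) = ∏ i, ∫ y, f i y ∂μ :=
    fun f => MeasureTheory.integral_fintype_prod_eq_prod f
  have hintp : ∀ σ τ : Equiv.Perm (Fin N),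
      Integrable (fun x : Fin N → E =>
        ∏ i, (s (σ i) (x i) * (starRingEnd ℂ) (s (τ i) (x i)))) (Measure.pi fun _ => μ) :=
    fun σ τ => Integrable.fintype_prod (f := fun i y => s (σ i) y * (starRingEnd ℂ) (s (τ i) y))
      (fun i => hint (σ i) (τ i))
  rw [integral_finset_sum _ (fun σ _ =>
    integrable_finset_sum _ (fun τ _ => ((hintp σ τ).const_mul (c σ τ))))]
  have : ∀ σ : Equiv.Perm (Fin N),
      (∫ x : Fin N → E, ∑ τ : Equiv.Perm (Fin N),
        c σ τ * ∏ i, (s (σ i) (x i) * (starRingEnd ℂ) (s (τ i) (x i)))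
        ∂(Measure.pi fun _ => μ)) = c σ σ := by
    intro σ
    rw [integral_finset_sum _ (fun τ _ => ((hintp σ τ).const_mul (c σ τ)))]
    have hval : ∀ τ : Equiv.Perm (Fin N),
        (∫ x : Fin N → E, c σ τ * ∏ i, (s (σ i) (x i) * (starRingEnd ℂ) (s (τ i) (x i)))
          ∂(Measure.pi fun _ => μ)) = c σ τ * (if σ = τ then 1 else 0) := by
      intro τ
      rw [integral_const_mul, pi_int fun i y => s (σ i) y * (starRingEnd ℂ) (s (τ i) y)]
      congr 1
      simp_rw [horth]
      by_cases h : σ = τ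
      · subst h; simp
      · rw [if_neg h]
        obtain ⟨i, hi⟩ := Function.ne_iff.mp (fun hfe => h (Equiv.coe_fn_injective hfe))
        exact Finset.prod_eq_zero (Finset.mem_univ i) (by simp [hi])
    simp_rw [hval]
    simp
  simp_rw [this, hc]
  have hsq : ∀ σ : Equiv.Perm (Fin N),
      ((Equiv.Perm.sign σ : ℤ) : ℂ) * ((Equiv.Perm.sign σ : ℤ) : ℂ) = 1 := by
    intro σ
    rw [← Int.cast_mul, ← Units.val_mul]
    simp
  simp_rw [hsq]
  simp [Fintype.card_perm]
end

section
/- Let (E, μ) be a σ-finite measure space, N ≥ 1, and let s_1,…,s_N ∈ L²(E, μ; ℂ) be orthonormal. Define K(x,y) = ∑_{j=1}^N s_j(x) · conj(s_j(y)). Then for every 1 ≤ k ≤ N and all x_1,…,x_{k−1} ∈ E, ∫_E det( K(x_i, x_j) )_{i,j=1}^{k} dμ(x_k) = (N − k + 1) · det( K(x_i, x_j) )_{i,j=1}^{k−1}, where the determinant of the empty (0×0) matrix is 1. -/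
open MeasureTheory Finset

section Aux

variable {E : Type*} [MeasurableSpace E] {μ : Measure E} {N : ℕ} {s : Fin N → E → ℂ}

lemma projKernel.memLp_conj {f : E → ℂ} (hf : MemLp f 2 μ) :
    MemLp (fun y => (starRingEnd ℂ) (f y)) 2 μ :=
  (Complex.conjCLE.toContinuousLinearMap).comp_memLp' hf

lemma projKernel.integrable_mul_conj {f g : E → ℂ} (hf : MemLp f 2 μ) (hg : MemLp g 2 μ) :
    Integrable (fun y => f y * (starRingEnd ℂ) (g y)) μ := by
  have h : MemLp (f • fun y => (starRingEnd ℂ) (g y)) 1 μ :=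
    MemLp.smul (projKernel.memLp_conj hg) hf
  exact memLp_one_iff_integrable.mp h

lemma projKernel.integrable_ab (hs : ∀ j, MemLp (s j) 2 μ) (a b : E) :
    Integrable (fun y => projKernel s a y * projKernel s y b) μ := by
  have hfun : (fun y => projKernel s a y * projKernel s y b)
      = fun y => ∑ j : Fin N, ∑ l : Fin N,
          (s j a * (starRingEnd ℂ) (s l b)) * (s l y * (starRingEnd ℂ) (s j y)) := by
    funext y
    simp only [projKernel, Finset.sum_mul_sum]
    exact Finset.sum_congr rfl fun j _ => Finset.sum_congr rfl fun l _ => by ring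
  rw [hfun]
  refine integrable_finset_sum _ fun j _ => integrable_finset_sum _ fun l _ => ?_
  exact (projKernel.integrable_mul_conj (hs l) (hs j)).const_mul _

lemma projKernel.integrable_diag (hs : ∀ j, MemLp (s j) 2 μ) :
    Integrable (fun y => projKernel s y y) μ := by
  simp only [projKernel]
  exact integrable_finset_sum _ fun j _ => projKernel.integrable_mul_conj (hs j) (hs j)

lemma projKernel.trace_int (hs : ∀ j, MemLp (s j) 2 μ)
    (horth : ∀ i j : Fin N,
      ∫ x, s i x * (starRingEnd ℂ) (s j x) ∂μ = if i = j then 1 else 0) :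
    ∫ y, projKernel s y y ∂μ = (N : ℂ) := by
  simp only [projKernel]
  rw [integral_finset_sum _ fun j _ => projKernel.integrable_mul_conj (hs j) (hs j)]
  simp [horth]

lemma projKernel.repro (hs : ∀ j, MemLp (s j) 2 μ)
    (horth : ∀ i j : Fin N,
      ∫ x, s i x * (starRingEnd ℂ) (s j x) ∂μ = if i = j then 1 else 0) (a b : E) :
    ∫ y, projKernel s a y * projKernel s y b ∂μ = projKernel s a b := by
  have hfun : (fun y => projKernel s a y * projKernel s y b)
      = fun y => ∑ j : Fin N, ∑ l : Fin N,
          (s j a * (starRingEnd ℂ) (s l b)) * (s l y * (starRingEnd ℂ) (s j y)) := by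
    funext y
    simp only [projKernel, Finset.sum_mul_sum]
    exact Finset.sum_congr rfl fun j _ => Finset.sum_congr rfl fun l _ => by ring
  rw [hfun, integral_finset_sum _ fun j _ => integrable_finset_sum _ fun l _ =>
    (projKernel.integrable_mul_conj (hs l) (hs j)).const_mul _]
  have key : ∀ j : Fin N, (∫ y, ∑ l : Fin N,
      (s j a * (starRingEnd ℂ) (s l b)) * (s l y * (starRingEnd ℂ) (s j y)) ∂μ)
      = s j a * (starRingEnd ℂ) (s j b) := by
    intro j
    rw [integral_finset_sum _ fun l _ =>
      (projKernel.integrable_mul_conj (hs l) (hs j)).const_mul _]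
    rw [Finset.sum_eq_single j]
    · rw [integral_const_mul, horth j j]; simp
    · intro l _ hlj
      rw [integral_const_mul, horth l j, if_neg hlj, mul_zero]
    · simp
  simp_rw [key]; rfl

/-- The product formula when the new index is fixed (`p = 0`). -/
lemma projKernel.prod_zero {k : ℕ} (x : Fin k → E) (τ : Equiv.Perm (Fin k)) (y : E) :
    (∏ i : Fin (k+1), projKernel s
        ((Fin.cons y x : Fin (k+1) → E) (Equiv.Perm.decomposeFin.symm ((0 : Fin (k+1)), τ) i))
        ((Fin.cons y x : Fin (k+1) → E) i))
    = projKernel s y y * ∏ j : Fin k, projKernel s (x (τ j)) (x j) := by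
  rw [Fin.prod_univ_succ]
  simp [Equiv.Perm.decomposeFin_symm_apply_zero, Equiv.Perm.decomposeFin_symm_apply_succ,
    Equiv.swap_self]

/-- The product formula when the new index is moved (`p = m.succ`). -/
lemma projKernel.prod_succ {k : ℕ} (x : Fin k → E) (m : Fin k) (τ : Equiv.Perm (Fin k)) (y : E) :
    (∏ i : Fin (k+1), projKernel s
        ((Fin.cons y x : Fin (k+1) → E) (Equiv.Perm.decomposeFin.symm (m.succ, τ) i))
        ((Fin.cons y x : Fin (k+1) → E) i))
    = (projKernel s (x m) y * projKernel s y (x (τ⁻¹ m))) *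
        ∏ j ∈ univ.erase (τ⁻¹ m), projKernel s (x (τ j)) (x j) := by
  rw [Fin.prod_univ_succ]
  rw [← Finset.mul_prod_erase univ _ (mem_univ (τ⁻¹ m))]
  have h1 : ∀ j : Fin k, j ≠ τ⁻¹ m →
      Equiv.swap (0 : Fin (k+1)) m.succ (τ j).succ = (τ j).succ := by
    intro j hj
    apply Equiv.swap_apply_of_ne_of_ne (Fin.succ_ne_zero _)
    simp only [ne_eq, Fin.succ_inj]
    intro h; exact hj (by rw [← h]; simp)
  have h2 : Equiv.swap (0 : Fin (k+1)) m.succ (τ (τ⁻¹ m)).succ = 0 := by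
    simp [Equiv.Perm.coe_inv, Equiv.apply_symm_apply, Equiv.swap_apply_right]
  rw [Finset.prod_congr rfl (fun j hj => by
    rw [Equiv.Perm.decomposeFin_symm_apply_succ, h1 j (Finset.ne_of_mem_erase hj)])]
  simp only [Equiv.Perm.decomposeFin_symm_apply_zero, Equiv.Perm.decomposeFin_symm_apply_succ,
    h2, Equiv.swap_apply_right, Fin.cons_zero, Fin.cons_succ, Equiv.Perm.coe_inv, Equiv.apply_symm_apply]
  ring

end Aux

/-- Integrating out the last variable of a `(k+1) × (k+1)` determinant of the projection
kernel: `∫ det(K(x_i,x_j))_{i,j ≤ k+1} dμ(x_{k+1}) = (N - k) · det(K(x_i,x_j))_{i,j ≤ k}`.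
(With `k+1` playing the role of the `k` of the statement, `1 ≤ k+1 ≤ N` and
`N - (k+1) + 1 = N - k`.) -/
theorem stmt7 {E : Type*} [MeasurableSpace E] (μ : Measure E) [SigmaFinite μ]
    {N : ℕ} (hN : 1 ≤ N) (s : Fin N → E → ℂ) (hs : ∀ j, MemLp (s j) 2 μ)
    (horth : ∀ i j : Fin N,
      ∫ x, s i x * (starRingEnd ℂ) (s j x) ∂μ = if i = j then 1 else 0)
    (k : ℕ) (hk : k < N) (x : Fin k → E) :
    ∫ y, Matrix.det (Matrix.of fun i j : Fin (k + 1) =>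
          projKernel s ((Fin.snoc x y : Fin (k + 1) → E) i) ((Fin.snoc x y : Fin (k + 1) → E) j)) ∂μ
      = ((N - k : ℕ) : ℂ) *
          Matrix.det (Matrix.of fun i j : Fin k => projKernel s (x i) (x j)) := by
  classical
  set D : ℂ := Matrix.det (Matrix.of fun i j : Fin k => projKernel s (x i) (x j)) with hD
  -- the term of the permutation expansion, indexed by `Fin (k+1) × Perm (Fin k)`
  set F : Fin (k+1) → Equiv.Perm (Fin k) → E → ℂ := fun p τ y =>
    ((Equiv.Perm.sign (Equiv.Perm.decomposeFin.symm (p, τ)) : ℤ) : ℂ) *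
      ∏ i : Fin (k+1), projKernel s
        ((Fin.cons y x : Fin (k+1) → E) (Equiv.Perm.decomposeFin.symm (p, τ) i))
        ((Fin.cons y x : Fin (k+1) → E) i) with hF
  have hkey : ∀ y : E,
      Matrix.det (Matrix.of fun i j : Fin (k + 1) =>
          projKernel s ((Fin.snoc x y : Fin (k + 1) → E) i) ((Fin.snoc x y : Fin (k + 1) → E) j))
      = ∑ p : Fin (k+1), ∑ τ : Equiv.Perm (Fin k), F p τ y := by
    intro y
    have hz : (Fin.snoc x y : Fin (k+1) → E)
        = fun i => (Fin.cons y x : Fin (k+1) → E) (finRotate (k+1) i) :=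
      Fin.snoc_eq_cons_rotate x y
    have hsub : (Matrix.of fun i j : Fin (k + 1) =>
          projKernel s ((Fin.snoc x y : Fin (k + 1) → E) i) ((Fin.snoc x y : Fin (k + 1) → E) j))
        = (Matrix.of fun i j : Fin (k + 1) =>
            projKernel s ((Fin.cons y x : Fin (k+1) → E) i)
              ((Fin.cons y x : Fin (k+1) → E) j)).submatrix
            (finRotate (k+1)) (finRotate (k+1)) := by
      ext i j
      simp [hz, Matrix.submatrix]
    rw [hsub, Matrix.det_submatrix_equiv_self, Matrix.det_apply',
      ← Equiv.sum_comp (Equiv.Perm.decomposeFin.symm :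
          (Fin (k+1) × Equiv.Perm (Fin k)) ≃ Equiv.Perm (Fin (k+1))),
      Fintype.sum_prod_type]
    rfl
  -- integrability of each term
  have hint : ∀ (p : Fin (k+1)) (τ : Equiv.Perm (Fin k)), Integrable (F p τ) μ := by
    intro p τ
    induction p using Fin.cases with
    | zero =>
        have : F 0 τ = fun y =>
            ((Equiv.Perm.sign (Equiv.Perm.decomposeFin.symm ((0 : Fin (k+1)), τ)) : ℤ) : ℂ) *
              (projKernel s y y * ∏ j : Fin k, projKernel s (x (τ j)) (x j)) := by
          funext y; simp only [hF]; rw [projKernel.prod_zero]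
        rw [this]
        exact ((projKernel.integrable_diag hs).mul_const _).const_mul _
    | succ m =>
        have : F m.succ τ = fun y =>
            ((Equiv.Perm.sign (Equiv.Perm.decomposeFin.symm (m.succ, τ)) : ℤ) : ℂ) *
              ((projKernel s (x m) y * projKernel s y (x (τ⁻¹ m))) *
                ∏ j ∈ univ.erase (τ⁻¹ m), projKernel s (x (τ j)) (x j)) := by
          funext y; simp only [hF]; rw [projKernel.prod_succ]
        rw [this]
        exact ((projKernel.integrable_ab hs _ _).mul_const _).const_mul _
  -- swap integral and sums
  have hswap : ∫ y, Matrix.det (Matrix.of fun i j : Fin (k + 1) =>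
          projKernel s ((Fin.snoc x y : Fin (k + 1) → E) i) ((Fin.snoc x y : Fin (k + 1) → E) j)) ∂μ
      = ∑ p : Fin (k+1), ∑ τ : Equiv.Perm (Fin k), ∫ y, F p τ y ∂μ := by
    simp_rw [hkey]
    rw [integral_finset_sum _ fun p _ => integrable_finset_sum _ fun τ _ => hint p τ]
    exact Finset.sum_congr rfl fun p _ => integral_finset_sum _ fun τ _ => hint p τ
  rw [hswap, Fin.sum_univ_succ]
  -- the `p = 0` block
  have h0 : (∑ τ : Equiv.Perm (Fin k), ∫ y, F 0 τ y ∂μ) = (N : ℂ) * D := by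
    have hterm : ∀ τ : Equiv.Perm (Fin k), (∫ y, F 0 τ y ∂μ)
        = ((Equiv.Perm.sign τ : ℤ) : ℂ) *
            ((N : ℂ) * ∏ j : Fin k, projKernel s (x (τ j)) (x j)) := by
      intro τ
      simp_rw [hF, projKernel.prod_zero]
      rw [integral_const_mul, integral_mul_const, projKernel.trace_int hs horth]
      rw [Equiv.Perm.decomposeFin.symm_sign, if_pos rfl, one_mul]
    simp_rw [hterm]
    rw [hD, Matrix.det_apply', Finset.mul_sum]
    refine Finset.sum_congr rfl fun τ _ => ?_
    simp only [Matrix.of_apply]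
    ring
  -- the `p = m.succ` blocks
  have hsuc : ∀ m : Fin k, (∑ τ : Equiv.Perm (Fin k), ∫ y, F m.succ τ y ∂μ) = -D := by
    intro m
    have hterm : ∀ τ : Equiv.Perm (Fin k), (∫ y, F m.succ τ y ∂μ)
        = -(((Equiv.Perm.sign τ : ℤ) : ℂ) * ∏ j : Fin k, projKernel s (x (τ j)) (x j)) := by
      intro τ
      simp_rw [hF, projKernel.prod_succ]
      rw [integral_const_mul, integral_mul_const, projKernel.repro hs horth]
      rw [Equiv.Perm.decomposeFin.symm_sign, if_neg (Fin.succ_ne_zero m)]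
      have hC : projKernel s (x m) (x (τ⁻¹ m)) *
          ∏ j ∈ univ.erase (τ⁻¹ m), projKernel s (x (τ j)) (x j)
          = ∏ j : Fin k, projKernel s (x (τ j)) (x j) := by
        rw [← Finset.mul_prod_erase univ _ (mem_univ (τ⁻¹ m)), Equiv.Perm.coe_inv, Equiv.apply_symm_apply]
      rw [hC]
      push_cast
      ring
    simp_rw [hterm]
    rw [hD, Matrix.det_apply', ← Finset.sum_neg_distrib]
    exact Finset.sum_congr rfl fun τ _ => by simp only [Matrix.of_apply]
  simp_rw [hsuc]
  rw [h0]
  simp only [Finset.sum_const, Finset.card_univ, Fintype.card_fin, nsmul_eq_mul]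
  rw [Nat.cast_sub hk.le]
  ring
end

section
/- Let (E, μ) be a σ-finite measure space, N ≥ 1, and let s_1,…,s_N ∈ L²(E, μ; ℂ) be orthonormal. Define K(x,y) = ∑_{j=1}^N s_j(x) · conj(s_j(y)). Then for every bounded measurable f : E → ℝ, (1/N!) ∫_{E^N} ( ∑_{i=1}^N f(x_i) )² det( K(x_i, x_j) )_{i,j=1}^{N} dμ^{⊗N} − ( ∫_E f(x) K(x,x) dμ(x) )² = ∫_E f(x)² K(x,x) dμ(x) − ∫_E ∫_E |K(x,y)|² f(x) f(y) dμ(x) dμ(y). That is, the variance of the linear statistic of the orthogonal ensemble equals ∫ f² K(x,x) dμ − ∬ |K(x,y)|² f(x) f(y) dμ dμ. -/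
open MeasureTheory Finset
open scoped Matrix

namespace Stmt9Aux

def eKL {N : ℕ} (k l i : Fin N) : ℕ := (if i = k then 1 else 0) + (if i = l then 1 else 0)

noncomputable def mI {E : Type*} [MeasurableSpace E] (μ : Measure E) {N : ℕ}
    (s : Fin N → E → ℂ) (f : E → ℝ) (e : ℕ) (a b : Fin N) : ℂ :=
  ∫ x, ((f x : ℂ) ^ e) * (s a x * (starRingEnd ℂ) (s b x)) ∂μ

noncomputable def hterm {E : Type*} {N : ℕ} (s : Fin N → E → ℂ) (f : E → ℝ)
    (k l : Fin N) (σ τ : Equiv.Perm (Fin N)) (i : Fin N) : E → ℂ :=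
  fun t => ((f t : ℂ) ^ (eKL k l i)) * (s (σ i) t * (starRingEnd ℂ) (s (τ i) t))

lemma prodPow {N : ℕ} (k l : Fin N) (F : Fin N → ℂ) :
    ∏ i, (F i) ^ (eKL k l i) = F k * F l := by
  classical
  simp only [eKL, pow_add]
  rw [Finset.prod_mul_distrib]
  congr 1 <;>
  · simp only [pow_ite, pow_one, pow_zero]
    simp [Finset.prod_ite_eq']

lemma permEqOfEqOffOne {N : ℕ} (σ τ : Equiv.Perm (Fin N)) (k : Fin N)
    (h : ∀ i, i ≠ k → σ i = τ i) : σ = τ := by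
  have hk : σ⁻¹ (τ k) = k := by
    by_contra hne
    have h2 := h _ hne
    rw [Equiv.Perm.inv_def, Equiv.apply_symm_apply] at h2
    exact hne (τ.injective h2.symm)
  have hσk : σ k = τ k := by
    conv_lhs => rw [← hk]
    rw [Equiv.Perm.inv_def, Equiv.apply_symm_apply]
  ext i
  rcases eq_or_ne i k with rfl | hik
  · rw [hσk]
  · rw [h i hik]

lemma permEqOrSwap {N : ℕ} (σ τ : Equiv.Perm (Fin N)) (k l : Fin N) (hkl : k ≠ l)
    (h : ∀ i, i ≠ k → i ≠ l → σ i = τ i) : τ = σ ∨ τ = σ * Equiv.swap k l := by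
  classical
  have mem : ∀ j : Fin N, (j = k ∨ j = l) → σ⁻¹ (τ j) = k ∨ σ⁻¹ (τ j) = l := by
    intro j hj
    by_contra hc
    push_neg at hc
    have h2 := h _ hc.1 hc.2
    rw [Equiv.Perm.inv_def, Equiv.apply_symm_apply] at h2
    have hjj : σ⁻¹ (τ j) = j := τ.injective h2.symm
    rcases hj with rfl | rfl
    · exact hc.1 hjj
    · exact hc.2 hjj
  have happ : ∀ j : Fin N, σ⁻¹ (τ j) = k ∨ σ⁻¹ (τ j) = l → τ j = σ k ∨ τ j = σ l := by
    intro j hj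
    rcases hj with hj | hj
    · left; rw [← hj, Equiv.Perm.inv_def, Equiv.apply_symm_apply]
    · right; rw [← hj, Equiv.Perm.inv_def, Equiv.apply_symm_apply]
  rcases happ k (mem k (Or.inl rfl)) with hk | hk
  · have hl : τ l = σ l := by
      rcases happ l (mem l (Or.inr rfl)) with hl | hl
      · exact absurd (τ.injective (hl.trans hk.symm)) hkl.symm
      · exact hl
    left
    ext i
    rcases eq_or_ne i k with rfl | hik
    · rw [hk]
    rcases eq_or_ne i l with rfl | hil
    · rw [hl]
    · rw [← h i hik hil]
  · have hl : τ l = σ k := by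
      rcases happ l (mem l (Or.inr rfl)) with hl | hl
      · exact hl
      · exact absurd (τ.injective (hl.trans hk.symm)) hkl.symm
    right
    ext i
    rcases eq_or_ne i k with rfl | hik
    · rw [hk, Equiv.Perm.mul_apply, Equiv.swap_apply_left]
    rcases eq_or_ne i l with rfl | hil
    · rw [hl, Equiv.Perm.mul_apply, Equiv.swap_apply_right]
    · rw [← h i hik hil, Equiv.Perm.mul_apply, Equiv.swap_apply_of_ne_of_ne hik hil]

lemma detFactor {E : Type*} {N : ℕ} (s : Fin N → E → ℂ) (x : Fin N → E) :
    Matrix.det (Matrix.of fun i j : Fin N => projKernel s (x i) (x j))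
      = (∑ σ : Equiv.Perm (Fin N), ((Equiv.Perm.sign σ : ℤ) : ℂ) * ∏ i, s (σ i) (x i)) *
        (∑ τ : Equiv.Perm (Fin N), ((Equiv.Perm.sign τ : ℤ) : ℂ) *
          ∏ i, (starRingEnd ℂ) (s (τ i) (x i))) := by
  classical
  set M : Matrix (Fin N) (Fin N) ℂ := Matrix.of fun i j => s i (x j) with hM
  have h1 : Matrix.of (fun i j : Fin N => projKernel s (x i) (x j)) = (Mᴴ * M)ᵀ := by
    ext i j
    simp [Matrix.mul_apply, projKernel, Matrix.conjTranspose_apply, hM, mul_comm]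
  rw [h1, Matrix.det_transpose, Matrix.det_mul, Matrix.det_conjTranspose, Matrix.det_apply',
    mul_comm]
  congr 1
  show (starRingEnd ℂ)
      (∑ σ : Equiv.Perm (Fin N), ((Equiv.Perm.sign σ : ℤ) : ℂ) * ∏ i, M (σ i) i) = _
  rw [map_sum]
  refine Finset.sum_congr rfl fun τ _ => ?_
  rw [map_mul, map_prod, map_intCast]
  rfl

lemma pointwise {E : Type*} {N : ℕ} (s : Fin N → E → ℂ) (f : E → ℝ) (x : Fin N → E) :
    (∑ i, ((f (x i) : ℝ) : ℂ)) ^ 2 *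
        Matrix.det (Matrix.of fun i j : Fin N => projKernel s (x i) (x j))
      = ∑ k, ∑ l, ∑ σ : Equiv.Perm (Fin N), ∑ τ : Equiv.Perm (Fin N),
          ((Equiv.Perm.sign σ : ℤ) : ℂ) * ((Equiv.Perm.sign τ : ℤ) : ℂ) *
            ∏ i, hterm s f k l σ τ i (x i) := by
  classical
  rw [detFactor, sq]
  simp only [Finset.sum_mul_sum]
  refine Finset.sum_congr rfl fun k _ => ?_
  rw [Finset.sum_comm]
  refine Finset.sum_congr rfl fun l _ => Finset.sum_congr rfl fun σ _ =>
    Finset.sum_congr rfl fun τ _ => ?_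
  have hp : ∏ i, hterm s f k l σ τ i (x i)
      = (((f (x k) : ℂ)) * ((f (x l) : ℂ))) *
        ((∏ i, s (σ i) (x i)) * ∏ i, (starRingEnd ℂ) (s (τ i) (x i))) := by
    have h1 : ∏ i, hterm s f k l σ τ i (x i)
        = (∏ i, ((f (x i) : ℂ)) ^ (eKL k l i)) *
          ∏ i, (s (σ i) (x i) * (starRingEnd ℂ) (s (τ i) (x i))) := by
      rw [← Finset.prod_mul_distrib]
      rfl
    rw [h1, prodPow, Finset.prod_mul_distrib]
  rw [hp]
  ring

section Analytic
variable {E : Type*} [MeasurableSpace E] (μ : Measure E) [SigmaFinite μ] {N : ℕ}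
  (s : Fin N → E → ℂ) (f : E → ℝ)

omit [SigmaFinite μ] in
lemma intTerm (hs : ∀ j, MemLp (s j) 2 μ) (hf : Measurable f) (hbd : ∃ C, ∀ x, |f x| ≤ C)
    (e : ℕ) (a b : Fin N) :
    Integrable (fun x => ((f x : ℂ) ^ e) * (s a x * (starRingEnd ℂ) (s b x))) μ := by
  have hconj : MemLp (fun x => (starRingEnd ℂ) (s b x)) 2 μ := by
    have := (hs b).inner_const (𝕜 := ℂ) (1 : ℂ)
    simpa [RCLike.inner_apply, mul_comm] using this
  have hmul : Integrable (fun x => s a x * (starRingEnd ℂ) (s b x)) μ := by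
    rw [← memLp_one_iff_integrable]
    have := MemLp.smul (p := 2) (q := 2) (r := 1) hconj (hs a)
      (hpqr := ⟨by simp [ENNReal.inv_two_add_inv_two]⟩)
    simpa [smul_eq_mul, Pi.mul_def] using this
  obtain ⟨C, hC⟩ := hbd
  refine hmul.bdd_mul (c := |C| ^ e) ?_ (Filter.Eventually.of_forall fun x => ?_)
  · exact ((Complex.measurable_ofReal.comp hf).pow_const e).aestronglyMeasurable
  · rw [norm_pow, Complex.norm_real]
    exact pow_le_pow_left₀ (abs_nonneg _) ((hC x).trans (le_abs_self C)) e

omit [SigmaFinite μ] in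
lemma mZero (horth : ∀ i j : Fin N,
      ∫ x, s i x * (starRingEnd ℂ) (s j x) ∂μ = if i = j then 1 else 0) (a b : Fin N) :
    mI μ s f 0 a b = if a = b then 1 else 0 := by
  rw [mI]
  simp only [pow_zero, one_mul]
  exact horth a b

lemma bigInt (hs : ∀ j, MemLp (s j) 2 μ) (hf : Measurable f) (hbd : ∃ C, ∀ x, |f x| ≤ C) :
    (∫ x : Fin N → E, (∑ i, ((f (x i) : ℝ) : ℂ)) ^ 2 *
        Matrix.det (Matrix.of fun i j : Fin N => projKernel s (x i) (x j))
        ∂(Measure.pi fun _ => μ))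
      = ∑ k, ∑ l, ∑ σ : Equiv.Perm (Fin N), ∑ τ : Equiv.Perm (Fin N),
          ((Equiv.Perm.sign σ : ℤ) : ℂ) * ((Equiv.Perm.sign τ : ℤ) : ℂ) *
            ∏ i, mI μ s f (eKL k l i) (σ i) (τ i) := by
  classical
  letI : MeasureSpace E := ⟨μ⟩
  haveI : SigmaFinite (volume : Measure E) := ‹SigmaFinite μ›
  have hpi : (Measure.pi fun _ : Fin N => μ) = (volume : Measure (Fin N → E)) :=
    (MeasureTheory.volume_pi).symm
  have hintProd : ∀ (k l : Fin N) (σ τ : Equiv.Perm (Fin N)),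
      Integrable (fun x : Fin N → E => ∏ i, hterm s f k l σ τ i (x i))
        (Measure.pi fun _ => μ) := by
    intro k l σ τ
    rw [hpi]
    exact MeasureTheory.Integrable.fintype_prod
      (f := fun i => hterm s f k l σ τ i)
      (fun i => intTerm μ s f hs hf hbd (eKL k l i) (σ i) (τ i))
  have hint : ∀ (k l : Fin N) (σ τ : Equiv.Perm (Fin N)),
      Integrable (fun x : Fin N → E =>
          ((Equiv.Perm.sign σ : ℤ) : ℂ) * ((Equiv.Perm.sign τ : ℤ) : ℂ) *
            ∏ i, hterm s f k l σ τ i (x i)) (Measure.pi fun _ => μ) := by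
    intro k l σ τ
    exact (hintProd k l σ τ).const_mul _
  rw [show (fun x : Fin N → E => (∑ i, ((f (x i) : ℝ) : ℂ)) ^ 2 *
        Matrix.det (Matrix.of fun i j : Fin N => projKernel s (x i) (x j)))
      = fun x : Fin N → E => ∑ k, ∑ l, ∑ σ : Equiv.Perm (Fin N), ∑ τ : Equiv.Perm (Fin N),
          ((Equiv.Perm.sign σ : ℤ) : ℂ) * ((Equiv.Perm.sign τ : ℤ) : ℂ) *
            ∏ i, hterm s f k l σ τ i (x i) from funext (pointwise s f)]
  rw [integral_finset_sum _ (fun k _ => integrable_finset_sum _ fun l _ =>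
    integrable_finset_sum _ fun σ _ => integrable_finset_sum _ fun τ _ => hint k l σ τ)]
  refine Finset.sum_congr rfl fun k _ => ?_
  rw [integral_finset_sum _ (fun l _ =>
    integrable_finset_sum _ fun σ _ => integrable_finset_sum _ fun τ _ => hint k l σ τ)]
  refine Finset.sum_congr rfl fun l _ => ?_
  rw [integral_finset_sum _ (fun σ _ => integrable_finset_sum _ fun τ _ => hint k l σ τ)]
  refine Finset.sum_congr rfl fun σ _ => ?_
  rw [integral_finset_sum _ (fun τ _ => hint k l σ τ)]
  refine Finset.sum_congr rfl fun τ _ => ?_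
  rw [integral_const_mul]
  congr 1
  rw [hpi]
  exact MeasureTheory.integral_fintype_prod_volume_eq_prod (fun i => hterm s f k l σ τ i)

lemma prodTwo {N : ℕ} (k l : Fin N) (hkl : k ≠ l) (g : Fin N → ℂ)
    (hg : ∀ i, i ≠ k → i ≠ l → g i = 1) : ∏ i, g i = g k * g l := by
  classical
  rw [← Finset.prod_subset (Finset.subset_univ ({k, l} : Finset (Fin N)))
    (fun i _ hi => by
      simp only [Finset.mem_insert, Finset.mem_singleton] at hi
      push_neg at hi
      exact hg i hi.1 hi.2)]
  rw [Finset.prod_pair hkl]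

omit [SigmaFinite μ] in
lemma tauSum (horth : ∀ i j : Fin N,
      ∫ x, s i x * (starRingEnd ℂ) (s j x) ∂μ = if i = j then 1 else 0)
    (k l : Fin N) (σ : Equiv.Perm (Fin N)) :
    ∑ τ : Equiv.Perm (Fin N),
        ((Equiv.Perm.sign σ : ℤ) : ℂ) * ((Equiv.Perm.sign τ : ℤ) : ℂ) *
          ∏ i, mI μ s f (eKL k l i) (σ i) (τ i)
      = if σ k = σ l then mI μ s f 2 (σ l) (σ l)
        else mI μ s f 1 (σ k) (σ k) * mI μ s f 1 (σ l) (σ l)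
          - mI μ s f 1 (σ k) (σ l) * mI μ s f 1 (σ l) (σ k) := by
  classical
  rcases eq_or_ne k l with rfl | hkl
  · rw [if_pos rfl]
    rw [Finset.sum_eq_single σ]
    · have hsgn : ((Equiv.Perm.sign σ : ℤ) : ℂ) * ((Equiv.Perm.sign σ : ℤ) : ℂ) = 1 := by
        rcases Int.units_eq_one_or (Equiv.Perm.sign σ) with h | h <;> simp [h]
      rw [hsgn, one_mul]
      rw [Finset.prod_eq_single k]
      · congr 1
        simp [eKL]
      · intro i _ hik
        have he : eKL k k i = 0 := by simp [eKL, hik]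
        rw [he, mZero μ s f horth]
        simp
      · intro h
        exact absurd (Finset.mem_univ k) h
    · intro τ _ hτ
      have hex : ∃ i, i ≠ k ∧ σ i ≠ τ i := by
        by_contra hc
        push_neg at hc
        exact hτ (permEqOfEqOffOne σ τ k fun i hik => hc i hik).symm
      obtain ⟨i, hik, hne⟩ := hex
      have he : eKL k k i = 0 := by simp [eKL, hik]
      have hzero : ∏ i', mI μ s f (eKL k k i') (σ i') (τ i') = 0 :=
        Finset.prod_eq_zero (Finset.mem_univ i)
          (by rw [he, mZero μ s f horth, if_neg hne])
      rw [hzero, mul_zero]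
    · intro h
      exact absurd (Finset.mem_univ σ) h
  · rw [if_neg (fun hc => hkl (σ.injective hc))]
    have hswapne : σ ≠ σ * Equiv.swap k l := by
      intro hcontra
      have h1 : Equiv.swap k l = 1 := (left_eq_mul).mp hcontra
      have h2 : Equiv.swap k l k = k := by rw [h1]; rfl
      rw [Equiv.swap_apply_left] at h2
      exact hkl h2.symm
    rw [← Finset.sum_subset
      (Finset.subset_univ ({σ, σ * Equiv.swap k l} : Finset (Equiv.Perm (Fin N))))
      (fun τ _ hτ => by
        simp only [Finset.mem_insert, Finset.mem_singleton] at hτ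
        push_neg at hτ
        have hex : ∃ i, i ≠ k ∧ i ≠ l ∧ σ i ≠ τ i := by
          by_contra hc
          push_neg at hc
          rcases permEqOrSwap σ τ k l hkl (fun i h1 h2 => hc i h1 h2) with h | h
          · exact hτ.1 h
          · exact hτ.2 h
        obtain ⟨i, hik, hil, hne⟩ := hex
        have he : eKL k l i = 0 := by simp [eKL, hik, hil]
        have hzero : ∏ i', mI μ s f (eKL k l i') (σ i') (τ i') = 0 :=
          Finset.prod_eq_zero (Finset.mem_univ i)
            (by rw [he, mZero μ s f horth, if_neg hne])
        rw [hzero, mul_zero])]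
    rw [Finset.sum_pair hswapne]
    have hekk : eKL k l k = 1 := by simp [eKL, hkl]
    have hekl : eKL k l l = 1 := by simp [eKL, Ne.symm hkl]
    have hterm1 : ((Equiv.Perm.sign σ : ℤ) : ℂ) * ((Equiv.Perm.sign σ : ℤ) : ℂ) *
        ∏ i, mI μ s f (eKL k l i) (σ i) (σ i)
        = mI μ s f 1 (σ k) (σ k) * mI μ s f 1 (σ l) (σ l) := by
      have hsgn : ((Equiv.Perm.sign σ : ℤ) : ℂ) * ((Equiv.Perm.sign σ : ℤ) : ℂ) = 1 := by
        rcases Int.units_eq_one_or (Equiv.Perm.sign σ) with h | h <;> simp [h]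
      rw [hsgn, one_mul]
      rw [prodTwo k l hkl _ (fun i hik hil => by
        have he : eKL k l i = 0 := by simp [eKL, hik, hil]
        rw [he, mZero μ s f horth, if_pos rfl])]
      rw [hekk, hekl]
    have hterm2 : ((Equiv.Perm.sign σ : ℤ) : ℂ) *
        ((Equiv.Perm.sign (σ * Equiv.swap k l) : ℤ) : ℂ) *
        ∏ i, mI μ s f (eKL k l i) (σ i) ((σ * Equiv.swap k l) i)
        = -(mI μ s f 1 (σ k) (σ l) * mI μ s f 1 (σ l) (σ k)) := by
      have hsgn : ((Equiv.Perm.sign σ : ℤ) : ℂ) *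
          ((Equiv.Perm.sign (σ * Equiv.swap k l) : ℤ) : ℂ) = -1 := by
        rw [Equiv.Perm.sign_mul, Equiv.Perm.sign_swap hkl]
        rcases Int.units_eq_one_or (Equiv.Perm.sign σ) with h | h <;> simp [h]
      rw [hsgn]
      rw [prodTwo k l hkl _ (fun i hik hil => by
        have he : eKL k l i = 0 := by simp [eKL, hik, hil]
        have happ : (σ * Equiv.swap k l) i = σ i := by
          rw [Equiv.Perm.mul_apply, Equiv.swap_apply_of_ne_of_ne hik hil]
        rw [he, happ, mZero μ s f horth, if_pos rfl])]
      have happk : (σ * Equiv.swap k l) k = σ l := by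
        rw [Equiv.Perm.mul_apply, Equiv.swap_apply_left]
      have happl : (σ * Equiv.swap k l) l = σ k := by
        rw [Equiv.Perm.mul_apply, Equiv.swap_apply_right]
      rw [hekk, hekl, happk, happl]
      ring
    rw [hterm1, hterm2]
    ring

noncomputable def WW {E : Type*} [MeasurableSpace E] (μ : Measure E) {N : ℕ}
    (s : Fin N → E → ℂ) (f : E → ℝ) (a b : Fin N) : ℂ :=
  if a = b then mI μ s f 2 b b
  else mI μ s f 1 a a * mI μ s f 1 b b - mI μ s f 1 a b * mI μ s f 1 b a

omit [SigmaFinite μ] in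
lemma quadSum (horth : ∀ i j : Fin N,
      ∫ x, s i x * (starRingEnd ℂ) (s j x) ∂μ = if i = j then 1 else 0) :
    (∑ k, ∑ l, ∑ σ : Equiv.Perm (Fin N), ∑ τ : Equiv.Perm (Fin N),
        ((Equiv.Perm.sign σ : ℤ) : ℂ) * ((Equiv.Perm.sign τ : ℤ) : ℂ) *
          ∏ i, mI μ s f (eKL k l i) (σ i) (τ i))
      = (N.factorial : ℂ) * ∑ a, ∑ b, WW μ s f a b := by
  classical
  have h1 : (∑ k, ∑ l, ∑ σ : Equiv.Perm (Fin N), ∑ τ : Equiv.Perm (Fin N),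
      ((Equiv.Perm.sign σ : ℤ) : ℂ) * ((Equiv.Perm.sign τ : ℤ) : ℂ) *
        ∏ i, mI μ s f (eKL k l i) (σ i) (τ i))
      = ∑ k, ∑ l, ∑ σ : Equiv.Perm (Fin N), WW μ s f (σ k) (σ l) :=
    Finset.sum_congr rfl fun k _ => Finset.sum_congr rfl fun l _ =>
      Finset.sum_congr rfl fun σ _ => tauSum μ s f horth k l σ
  rw [h1]
  have h2 : (∑ k, ∑ l, ∑ σ : Equiv.Perm (Fin N), WW μ s f (σ k) (σ l))
      = ∑ σ : Equiv.Perm (Fin N), ∑ k, ∑ l, WW μ s f (σ k) (σ l) := by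
    calc (∑ k, ∑ l, ∑ σ : Equiv.Perm (Fin N), WW μ s f (σ k) (σ l))
        = ∑ k, ∑ σ : Equiv.Perm (Fin N), ∑ l, WW μ s f (σ k) (σ l) :=
          Finset.sum_congr rfl fun k _ => Finset.sum_comm
      _ = ∑ σ : Equiv.Perm (Fin N), ∑ k, ∑ l, WW μ s f (σ k) (σ l) := Finset.sum_comm
  rw [h2]
  have h3 : ∀ σ : Equiv.Perm (Fin N),
      (∑ k, ∑ l, WW μ s f (σ k) (σ l)) = ∑ a, ∑ b, WW μ s f a b := by
    intro σ
    have hinner : ∀ k, (∑ l, WW μ s f (σ k) (σ l)) = ∑ b, WW μ s f (σ k) b := fun k =>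
      Fintype.sum_equiv σ (fun l => WW μ s f (σ k) (σ l)) (fun b => WW μ s f (σ k) b)
        (fun l => rfl)
    rw [Finset.sum_congr rfl fun k _ => hinner k]
    exact Fintype.sum_equiv σ (fun k => ∑ b, WW μ s f (σ k) b) (fun a => ∑ b, WW μ s f a b)
      (fun k => rfl)
  rw [Finset.sum_congr rfl fun σ _ => h3 σ, Finset.sum_const, Finset.card_univ,
    Fintype.card_perm, Fintype.card_fin, nsmul_eq_mul]

lemma intA (hs : ∀ j, MemLp (s j) 2 μ) (hf : Measurable f) (hbd : ∃ C, ∀ x, |f x| ≤ C) :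
    ∫ x, ((f x : ℝ) : ℂ) * projKernel s x x ∂μ = ∑ a, mI μ s f 1 a a := by
  rw [show (fun x => ((f x : ℝ) : ℂ) * projKernel s x x)
      = fun x => ∑ a, ((f x : ℂ) ^ 1) * (s a x * (starRingEnd ℂ) (s a x)) from
    funext fun x => by rw [projKernel, Finset.mul_sum]; simp [pow_one]]
  rw [integral_finset_sum _ fun a _ => intTerm μ s f hs hf hbd 1 a a]
  rfl

lemma intB (hs : ∀ j, MemLp (s j) 2 μ) (hf : Measurable f) (hbd : ∃ C, ∀ x, |f x| ≤ C) :
    ∫ x, (((f x) ^ 2 : ℝ) : ℂ) * projKernel s x x ∂μ = ∑ a, mI μ s f 2 a a := by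
  rw [show (fun x => (((f x) ^ 2 : ℝ) : ℂ) * projKernel s x x)
      = fun x => ∑ a, ((f x : ℂ) ^ 2) * (s a x * (starRingEnd ℂ) (s a x)) from
    funext fun x => by
      rw [projKernel, Complex.ofReal_pow, Finset.mul_sum]]
  rw [integral_finset_sum _ fun a _ => intTerm μ s f hs hf hbd 2 a a]
  rfl


lemma ofRealIntegral {α : Type*} [MeasurableSpace α] (ν : Measure α) (g : α → ℝ) :
    ((∫ x, g x ∂ν : ℝ) : ℂ) = ∫ x, ((g x : ℝ) : ℂ) ∂ν :=
  integral_ofReal.symm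

omit [SigmaFinite μ] in
lemma intC (hs : ∀ j, MemLp (s j) 2 μ) (hf : Measurable f) (hbd : ∃ C, ∀ x, |f x| ≤ C) :
    ((∫ x, ∫ y, ‖projKernel s x y‖ ^ 2 * f x * f y ∂μ ∂μ : ℝ) : ℂ)
      = ∑ a, ∑ b, mI μ s f 1 a b * mI μ s f 1 b a := by
  classical
  rw [ofRealIntegral]
  have hx : ∀ x, ((∫ y, ‖projKernel s x y‖ ^ 2 * f x * f y ∂μ : ℝ) : ℂ)
      = ∑ a, ∑ b, (((f x : ℂ) ^ 1) * (s a x * (starRingEnd ℂ) (s b x))) * mI μ s f 1 b a := by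
    intro x
    rw [ofRealIntegral]
    have hpt : ∀ y, ((‖projKernel s x y‖ ^ 2 * f x * f y : ℝ) : ℂ)
        = ∑ a, ∑ b, (((f x : ℂ) ^ 1) * (s a x * (starRingEnd ℂ) (s b x))) *
            (((f y : ℂ) ^ 1) * (s b y * (starRingEnd ℂ) (s a y))) := by
      intro y
      have habs : ((‖projKernel s x y‖ : ℝ) : ℂ) ^ 2
          = projKernel s x y * (starRingEnd ℂ) (projKernel s x y) := by
        rw [← Complex.ofReal_pow, Complex.sq_norm, Complex.mul_conj]
      push_cast
      rw [habs]
      rw [projKernel, map_sum]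
      rw [Finset.sum_mul_sum]
      rw [Finset.sum_mul, Finset.sum_mul]
      refine Finset.sum_congr rfl fun a _ => ?_
      rw [Finset.sum_mul, Finset.sum_mul]
      refine Finset.sum_congr rfl fun b _ => ?_
      simp only [map_mul, Complex.conj_conj, pow_one]
      ring
    rw [show (fun y => ((‖projKernel s x y‖ ^ 2 * f x * f y : ℝ) : ℂ))
        = fun y => ∑ a, ∑ b, (((f x : ℂ) ^ 1) * (s a x * (starRingEnd ℂ) (s b x))) *
            (((f y : ℂ) ^ 1) * (s b y * (starRingEnd ℂ) (s a y))) from funext hpt]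
    rw [integral_finset_sum _ fun a _ => integrable_finset_sum _ fun b _ =>
      (intTerm μ s f hs hf hbd 1 b a).const_mul _]
    refine Finset.sum_congr rfl fun a _ => ?_
    rw [integral_finset_sum _ fun b _ => (intTerm μ s f hs hf hbd 1 b a).const_mul _]
    refine Finset.sum_congr rfl fun b _ => ?_
    rw [integral_const_mul]
    rfl
  rw [show (fun x => ((∫ y, ‖projKernel s x y‖ ^ 2 * f x * f y ∂μ : ℝ) : ℂ))
      = fun x => ∑ a, ∑ b, (((f x : ℂ) ^ 1) * (s a x * (starRingEnd ℂ) (s b x))) *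
          mI μ s f 1 b a from funext hx]
  rw [integral_finset_sum _ fun a _ => integrable_finset_sum _ fun b _ =>
    (intTerm μ s f hs hf hbd 1 a b).mul_const _]
  refine Finset.sum_congr rfl fun a _ => ?_
  rw [integral_finset_sum _ fun b _ => (intTerm μ s f hs hf hbd 1 a b).mul_const _]
  refine Finset.sum_congr rfl fun b _ => ?_
  rw [integral_mul_const]
  rfl

end Analytic
end Stmt9Aux

open Stmt9Aux in
/-- Variance of a linear statistic of the orthogonal ensemble:
`(1/N!) ∫ (∑ f(x_i))² det(K(x_i,x_j)) dμ^N − (∫ f K(x,x) dμ)²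
  = ∫ f² K(x,x) dμ − ∬ |K(x,y)|² f(x) f(y) dμ dμ`. -/
theorem stmt9 {E : Type*} [MeasurableSpace E] (μ : Measure E) [SigmaFinite μ]
    {N : ℕ} (hN : 1 ≤ N) (s : Fin N → E → ℂ) (hs : ∀ j, MemLp (s j) 2 μ)
    (horth : ∀ i j : Fin N,
      ∫ x, s i x * (starRingEnd ℂ) (s j x) ∂μ = if i = j then 1 else 0)
    (f : E → ℝ) (hf : Measurable f) (hbd : ∃ C, ∀ x, |f x| ≤ C) :
    (N.factorial : ℂ)⁻¹ *
        (∫ x : Fin N → E, (∑ i, ((f (x i) : ℝ) : ℂ)) ^ 2 *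
          Matrix.det (Matrix.of fun i j : Fin N => projKernel s (x i) (x j))
          ∂(Measure.pi fun _ => μ))
      - (∫ x, ((f x : ℝ) : ℂ) * projKernel s x x ∂μ) ^ 2
      = (∫ x, (((f x) ^ 2 : ℝ) : ℂ) * projKernel s x x ∂μ)
        - (((∫ x, ∫ y, ‖projKernel s x y‖ ^ 2 * f x * f y ∂μ ∂μ) : ℝ) : ℂ) := by
  classical
  rw [bigInt μ s f hs hf hbd, quadSum μ s f horth, intA μ s f hs hf hbd,
    intB μ s f hs hf hbd, intC μ s f hs hf hbd]
  have hfac : (N.factorial : ℂ) ≠ 0 := Nat.cast_ne_zero.mpr (Nat.factorial_ne_zero N)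
  rw [← mul_assoc, inv_mul_cancel₀ hfac, one_mul, sq, Finset.sum_mul_sum]
  have hW : ∀ a b : Fin N, WW μ s f a b
      = ((if a = b then mI μ s f 2 b b else 0) + mI μ s f 1 a a * mI μ s f 1 b b)
        - mI μ s f 1 a b * mI μ s f 1 b a := by
    intro a b
    rw [WW]
    split_ifs with h
    · subst h; ring
    · ring
  rw [Finset.sum_congr rfl fun a _ => Finset.sum_congr rfl fun b _ => hW a b]
  have hdiag : ∀ a : Fin N, (∑ b, if a = b then mI μ s f 2 b b else 0) = mI μ s f 2 a a := by
    intro a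
    simp [Finset.sum_ite_eq]
  have key : (∑ a, ∑ b, (((if a = b then mI μ s f 2 b b else 0)
        + mI μ s f 1 a a * mI μ s f 1 b b) - mI μ s f 1 a b * mI μ s f 1 b a))
      = ((∑ a, mI μ s f 2 a a) + ∑ a, ∑ b, mI μ s f 1 a a * mI μ s f 1 b b)
        - ∑ a, ∑ b, mI μ s f 1 a b * mI μ s f 1 b a := by
    simp only [Finset.sum_sub_distrib, Finset.sum_add_distrib]
    congr 1
    congr 1
    exact Finset.sum_congr rfl fun a _ => by rw [hdiag a]
  rw [key]
  ring
end

section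
/- Let n ≥ 1 and m ∈ {1,…,n}. Then for all 𝐤′, 𝐤″ ∈ ℤ_{≥0}^n, the iterated integral over [0,∞)^n given by ∫_{[0,∞)^n} ( ∏_{j=1}^n L_{k′_j}(y_j) L_{k″_j}(y_j) ) · y_m · exp(−∑_{j=1}^n y_j) dy_1 ⋯ dy_n equals I_m(𝐤′,𝐤″), i.e. it equals 2k′_m + 1 if 𝐤′ = 𝐤″; it equals −max(k′_m, k″_m) if 𝐤′ and 𝐤″ differ only in the m-th coordinate and |k′_m − k″_m| = 1; and it equals 0 in all other cases. -/
open MeasureTheory Finset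

/-- Laguerre polynomial `L_k(x) = ∑_{j=0}^k (k choose j) (−x)^j / j!`. -/
noncomputable def Lag (k : ℕ) (x : ℝ) : ℝ :=
  ∑ j ∈ Finset.range (k + 1), (k.choose j : ℝ) * (-x) ^ j / (j.factorial : ℝ)

/-- The function `I_m(𝐤,𝐤′)`. -/
def Imf {n : ℕ} (m : Fin n) (k k' : Fin n → ℕ) : ℤ :=
  if k = k' then 2 * (k m : ℤ) + 1
  else if (∀ j, j ≠ m → k j = k' j) ∧ (k m = k' m + 1 ∨ k' m = k m + 1) then
    -(max (k m) (k' m) : ℤ)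
  else 0

section aux
open Set
lemma integrable_pow_exp (p : ℕ) :
    IntegrableOn (fun x : ℝ => x ^ p * Real.exp (-x)) (Ioi 0) := by
  have h := Real.GammaIntegral_convergent (s := (p : ℝ) + 1) (by positivity)
  refine (h.congr_fun (fun x hx => ?_) measurableSet_Ioi)
  rw [show ((p:ℝ) + 1 - 1) = (p:ℝ) by ring]; simp only [Real.rpow_natCast]
  ring

lemma integral_pow_exp (p : ℕ) :
    ∫ x in Ioi (0:ℝ), x ^ p * Real.exp (-x) = p.factorial := by
  have h := Real.Gamma_eq_integral (s := (p : ℝ) + 1) (by positivity)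
  rw [Real.Gamma_nat_eq_factorial] at h
  rw [h]
  refine setIntegral_congr_fun measurableSet_Ioi fun x hx => ?_
  rw [show ((p:ℝ) + 1 - 1) = (p:ℝ) by ring, Real.rpow_natCast]
  ring



lemma combU (b : ℕ) : ∀ j c : ℕ, ∑ i ∈ range (b+1), (-1:ℤ)^i * (b.choose i) * ((i+j).choose c)
    = (-1)^b * (if b ≤ c then (j.choose (c-b) : ℤ) else 0) := by
  induction b with
  | zero => intro j c; simp
  | succ b ih =>
    intro j c
    have hT : ∑ i ∈ range (b+1), (-1:ℤ)^i * (b.choose (i+1)) * ((i+1+j).choose c)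
        = (j.choose c : ℤ) - ∑ i ∈ range (b+1), (-1:ℤ)^i * (b.choose i) * ((i+j).choose c) := by
      have hlast : ∑ i ∈ range (b+1), (-1:ℤ)^i * (b.choose (i+1)) * ((i+1+j).choose c)
          = ∑ i ∈ range b, (-1:ℤ)^i * (b.choose (i+1)) * ((i+1+j).choose c) := by
        rw [Finset.sum_range_succ]; simp [Nat.choose_succ_self]
      have hU := Finset.sum_range_succ' (fun i => (-1:ℤ)^i * (b.choose i) * ((i+j).choose c)) b
      have hsign : ∑ i ∈ range b, (-1:ℤ)^(i+1) * (b.choose (i+1)) * ((i+1+j).choose c)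
          = - ∑ i ∈ range b, (-1:ℤ)^i * (b.choose (i+1)) * ((i+1+j).choose c) := by
        rw [← Finset.sum_neg_distrib]; exact Finset.sum_congr rfl fun i _ => by ring
      simp only [Nat.zero_add, pow_zero, Nat.choose_zero_right, Nat.cast_one, one_mul] at hU
      rw [hlast]
      rw [hsign] at hU
      linarith [hU]
    have hS := Finset.sum_range_succ' (fun i => (-1:ℤ)^i * ((b+1).choose i) * ((i+j).choose c)) (b+1)
    simp only [Nat.zero_add, pow_zero, Nat.choose_zero_right, Nat.cast_one, one_mul] at hS
    have hsplit : ∑ i ∈ range (b+1), (-1:ℤ)^(i+1) * ((b+1).choose (i+1)) * ((i+1+j).choose c)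
        = (- ∑ i ∈ range (b+1), (-1:ℤ)^i * (b.choose i) * ((i+(j+1)).choose c))
          - ∑ i ∈ range (b+1), (-1:ℤ)^i * (b.choose (i+1)) * ((i+1+j).choose c) := by
      rw [← Finset.sum_neg_distrib, ← Finset.sum_sub_distrib]
      refine Finset.sum_congr rfl fun i _ => ?_
      have h1 : ((b+1).choose (i+1) : ℤ) = b.choose i + b.choose (i+1) := by
        exact_mod_cast Nat.choose_succ_succ b i
      have h2 : i + (j+1) = i + 1 + j := by omega
      rw [h1, h2]; ring
    rw [hS, hsplit, hT, ih (j+1) c, ih j c]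
    by_cases hbc1 : b + 1 ≤ c
    · have hbc : b ≤ c := by omega
      have h3 : c - b = (c - (b+1)) + 1 := by omega
      have h4 : (((j+1).choose (c-b) : ℤ)) = (j.choose (c-(b+1)) : ℤ) + (j.choose (c-b) : ℤ) := by
        rw [h3, Nat.choose_succ_succ]; push_cast; ring
      simp only [if_pos hbc, if_pos hbc1, h4]
      have h5 : (j.choose (c-b) : ℤ) = ((j+1).choose (c-b) : ℤ) - (j.choose (c-(b+1)) : ℤ) := by
        rw [h4]; ring
      rw [h5]; ring
    · by_cases hbc : b ≤ c
      · have : b = c := by omega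
        subst this
        simp [hbc1]
        ring
      · simp [hbc, hbc1]

lemma lag_expand (b j : ℕ) (x : ℝ) :
    Lag b x * (x^j * Real.exp (-x)) = ∑ i ∈ Finset.range (b+1),
      ((b.choose i : ℝ) * (-1)^i / i.factorial) * (x^(i+j) * Real.exp (-x)) := by
  rw [Lag, Finset.sum_mul]
  refine Finset.sum_congr rfl fun i _ => ?_
  rw [neg_pow, pow_add]; ring

lemma integrable_lag_pow (b j : ℕ) :
    IntegrableOn (fun x => Lag b x * (x^j * Real.exp (-x))) (Ioi 0) := by
  have h : (fun x : ℝ => Lag b x * (x^j * Real.exp (-x))) = fun x => ∑ i ∈ Finset.range (b+1),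
      ((b.choose i : ℝ) * (-1)^i / i.factorial) * (x^(i+j) * Real.exp (-x)) :=
    funext (lag_expand b j)
  rw [h]
  exact integrable_finset_sum _ fun i _ => ((integrable_pow_exp (i+j)).const_mul _)

lemma cast_combU (b j c : ℕ) : ∑ i ∈ Finset.range (b+1),
    (-1:ℝ)^i * (b.choose i) * ((i+j).choose c)
    = (-1)^b * (if b ≤ c then (j.choose (c-b) : ℝ) else 0) := by
  have h := combU b j c
  have h2 := congrArg (fun z : ℤ => (z : ℝ)) h
  push_cast at h2
  split at h2 <;> split <;> first | (push_cast at *; linarith [h2]) | omega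

lemma moment (b j : ℕ) :
    ∫ x in Ioi (0:ℝ), Lag b x * (x^j * Real.exp (-x)) = (-1)^b * (j.choose b) * j.factorial := by
  simp_rw [lag_expand b j]
  rw [integral_finset_sum _ fun i _ => ((integrable_pow_exp (i+j)).const_mul _)]
  have step : ∀ i ∈ Finset.range (b+1),
      ∫ x in Ioi (0:ℝ), ((b.choose i : ℝ) * (-1)^i / i.factorial) * (x^(i+j) * Real.exp (-x))
        = ((-1:ℝ)^i * (b.choose i) * ((i+j).choose j)) * j.factorial := by
    intro i _
    rw [MeasureTheory.integral_const_mul, integral_pow_exp]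
    have hfac : ((i+j).factorial : ℝ) = ((i+j).choose j) * j.factorial * i.factorial := by
      have := Nat.choose_mul_factorial_mul_factorial (Nat.le_add_left j i)
      rw [Nat.add_sub_cancel] at this
      exact_mod_cast this.symm
    have hi : (i.factorial : ℝ) ≠ 0 := by positivity
    rw [hfac]; field_simp
  rw [Finset.sum_congr rfl step, ← Finset.sum_mul, cast_combU b j j]
  rcases le_or_gt b j with hb | hb
  · rw [if_pos hb, Nat.choose_symm hb]
  · rw [if_neg (by omega), Nat.choose_eq_zero_of_lt hb]
    push_cast; ring

lemma lagF (a b s : ℕ) :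
    ∫ x in Ioi (0:ℝ), Lag a x * Lag b x * (x^s * Real.exp (-x))
      = ∑ i ∈ Finset.range (a+1), ((a.choose i : ℝ) * (-1)^i / i.factorial)
          * ((-1:ℝ)^b * ((i+s).choose b) * (i+s).factorial) := by
  have hexp : ∀ x : ℝ, Lag a x * Lag b x * (x^s * Real.exp (-x))
      = ∑ i ∈ Finset.range (a+1), ((a.choose i:ℝ) * (-1)^i / i.factorial)
          * (Lag b x * (x^(i+s) * Real.exp (-x))) := by
    intro x
    rw [Lag, Finset.sum_mul, Finset.sum_mul]
    refine Finset.sum_congr rfl fun i _ => ?_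
    rw [neg_pow, pow_add]; ring
  simp_rw [hexp]
  rw [integral_finset_sum _ fun i _ => ((integrable_lag_pow b (i+s)).const_mul _)]
  refine Finset.sum_congr rfl fun i _ => ?_
  rw [MeasureTheory.integral_const_mul, moment]

lemma lag_zero (a b : ℕ) :
    ∫ x in Ioi (0:ℝ), Lag a x * Lag b x * Real.exp (-x) = if a = b then 1 else 0 := by
  have h0 : ∀ x : ℝ, Lag a x * Lag b x * Real.exp (-x)
      = Lag a x * Lag b x * ((x:ℝ)^0 * Real.exp (-x)) := by intro x; ring
  simp_rw [h0, lagF a b 0]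
  have step : ∀ i ∈ Finset.range (a+1),
      ((a.choose i : ℝ) * (-1)^i / i.factorial) * ((-1:ℝ)^b * ((i+0).choose b) * (i+0).factorial)
        = (-1:ℝ)^b * ((-1:ℝ)^i * (a.choose i) * ((i+0).choose b)) := by
    intro i _
    have hi : (i.factorial : ℝ) ≠ 0 := by positivity
    simp only [Nat.add_zero]
    field_simp
  rw [Finset.sum_congr rfl step, ← Finset.mul_sum, cast_combU a 0 b]
  rcases eq_or_ne a b with h | h
  · subst h; simp only [if_pos rfl, Nat.sub_self, Nat.choose_zero_right, Nat.cast_one, mul_one,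
      le_refl, if_true]
    rw [← pow_add]
    exact Even.neg_one_pow ⟨a, rfl⟩
  · rcases le_or_gt a b with hab | hab
    · have : b - a ≠ 0 := by omega
      rw [if_pos hab, Nat.choose_eq_zero_of_lt (by omega : 0 < b - a), if_neg h]
      push_cast; ring
    · rw [if_neg (by omega), if_neg h]; ring

lemma succ_mul_choose_split (i b : ℕ) :
    (i+1) * ((i+1).choose b) = (b+1) * ((i+1).choose (b+1)) + b * ((i+1).choose b) := by
  rcases le_or_gt b (i+1) with h | h
  · have h1 := Nat.choose_succ_right_eq (i+1) b
    have h2 : i + 1 - b + b = i + 1 := by omega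
    calc (i+1) * ((i+1).choose b) = (i+1-b) * ((i+1).choose b) + b * ((i+1).choose b) := by
          rw [← Nat.add_mul, h2]
      _ = (b+1) * ((i+1).choose (b+1)) + b * ((i+1).choose b) := by
          rw [Nat.mul_comm (b+1) _, h1, Nat.mul_comm]
  · rw [Nat.choose_eq_zero_of_lt h, Nat.choose_eq_zero_of_lt (by omega)]
    simp

lemma lag_one (a b : ℕ) :
    ∫ x in Ioi (0:ℝ), Lag a x * Lag b x * (x * Real.exp (-x))
      = if a = b then 2*(a:ℝ)+1 else if a = b+1 ∨ b = a+1 then -(max a b : ℝ) else 0 := by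
  have h0 : ∀ x : ℝ, Lag a x * Lag b x * (x * Real.exp (-x))
      = Lag a x * Lag b x * ((x:ℝ)^1 * Real.exp (-x)) := by intro x; ring
  simp_rw [h0, lagF a b 1]
  have step : ∀ i ∈ Finset.range (a+1),
      ((a.choose i : ℝ) * (-1)^i / i.factorial) * ((-1:ℝ)^b * ((i+1).choose b) * (i+1).factorial)
        = (-1:ℝ)^b * ((b+1) * ((-1:ℝ)^i * (a.choose i) * ((i+1).choose (b+1)))
            + b * ((-1:ℝ)^i * (a.choose i) * ((i+1).choose b))) := by
    intro i _
    have hi : (i.factorial : ℝ) ≠ 0 := by positivity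
    have hsp : (((i+1) * ((i+1).choose b) : ℕ) : ℝ)
        = ((b+1) * ((i+1).choose (b+1)) + b * ((i+1).choose b) : ℕ) := by
      rw [succ_mul_choose_split]
    have hfac : ((i+1).factorial : ℝ) = (i+1) * i.factorial := by
      rw [Nat.factorial_succ]; push_cast; ring
    push_cast at hsp
    have key : ((a.choose i : ℝ) * (-1)^i / i.factorial) * ((-1:ℝ)^b * ((i+1).choose b) * (i+1).factorial)
        = ((a.choose i : ℝ) * (-1)^i) * ((-1:ℝ)^b * ((i+1).choose b) * (i+1)) := by
      rw [hfac]; field_simp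
    rw [key]
    linear_combination ((-1:ℝ)^b * (-1)^i * (a.choose i)) * hsp
  rw [Finset.sum_congr rfl step, ← Finset.mul_sum, Finset.sum_add_distrib,
    ← Finset.mul_sum, ← Finset.mul_sum, cast_combU a 1 (b+1), cast_combU a 1 b]
  have hneg : ∀ c : ℕ, (-1:ℝ)^c * (-1)^c = 1 := fun c => by
    rw [← pow_add]; exact Even.neg_one_pow ⟨c, rfl⟩
  by_cases h1 : a = b
  · subst h1
    have e1 : a + 1 - a = 1 := by omega
    have e2 : a - a = 0 := by omega
    rw [if_pos (by omega : a ≤ a + 1), if_pos (le_refl a), e1, e2, if_pos rfl]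
    simp only [Nat.choose_self, Nat.choose_zero_right, Nat.cast_one, mul_one]
    push_cast
    nlinarith [hneg a]
  · by_cases h2 : a = b + 1
    · subst h2
      have e1 : b + 1 - (b + 1) = 0 := by omega
      rw [if_pos (le_refl (b+1)), if_neg (by omega : ¬ b + 1 ≤ b), e1,
        if_neg h1, if_pos (Or.inl rfl)]
      simp only [Nat.choose_zero_right, Nat.cast_one, mul_one, mul_zero, add_zero]
      rw [max_eq_left (by push_cast; linarith : ((b:ℕ):ℝ) ≤ ((b+1:ℕ):ℝ)), pow_succ]
      push_cast
      nlinarith [hneg b]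
    · by_cases h3 : b = a + 1
      · subst h3
        have e1 : a + 1 + 1 - a = 2 := by omega
        have e2 : a + 1 - a = 1 := by omega
        rw [if_pos (by omega : a ≤ a + 1 + 1), if_pos (by omega : a ≤ a + 1), e1, e2,
          if_neg h1, if_pos (Or.inr rfl)]
        have hc2 : Nat.choose 1 2 = 0 := by decide
        rw [hc2, max_eq_right (by push_cast; linarith : ((a:ℕ):ℝ) ≤ ((a+1:ℕ):ℝ)), pow_succ]
        simp only [Nat.choose_self, Nat.cast_one, mul_one, Nat.cast_zero, mul_zero, zero_add]
        push_cast
        nlinarith [hneg a]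
      · rw [if_neg h1, if_neg (by tauto : ¬ (a = b + 1 ∨ b = a + 1))]
        by_cases h4 : a ≤ b
        · have hlt : a < b := by omega
          have e1 : Nat.choose 1 (b + 1 - a) = 0 := Nat.choose_eq_zero_of_lt (by omega)
          have e2 : Nat.choose 1 (b - a) = 0 := Nat.choose_eq_zero_of_lt (by omega)
          rw [if_pos (by omega : a ≤ b + 1), if_pos h4, e1, e2]
          simp
        · rw [if_neg (by omega : ¬ a ≤ b + 1), if_neg h4]
          simp
end aux

/-- The multi-dimensional Laguerre orthogonality/recurrence integral:
`∫_{[0,∞)^n} (∏_j L_{k′_j}(y_j) L_{k″_j}(y_j)) y_m e^{−∑ y_j} dy = I_m(𝐤′,𝐤″)`. -/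

theorem stmt11 {n : ℕ} (hn : 1 ≤ n) (m : Fin n) (k' k'' : Fin n → ℕ) :
    ∫ y in {y : Fin n → ℝ | ∀ j, 0 ≤ y j},
        (∏ j, Lag (k' j) (y j) * Lag (k'' j) (y j)) * y m * Real.exp (-∑ j, y j)
      = (Imf m k' k'' : ℝ) := by
  classical
  set G : Fin n → ℝ → ℝ :=
    fun j t => Lag (k' j) t * Lag (k'' j) t * ((if j = m then t else 1) * Real.exp (-t)) with hG
  have hms : MeasurableSet {y : Fin n → ℝ | ∀ j, 0 ≤ y j} := by
    have hset : {y : Fin n → ℝ | ∀ j, 0 ≤ y j} = Set.pi Set.univ (fun _ => Set.Ici (0:ℝ)) := by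
      ext y
      exact ⟨fun h j _ => h j, fun h j => h j (Set.mem_univ j)⟩
    rw [hset]; exact MeasurableSet.univ_pi fun _ => measurableSet_Ici
  have hpoint : ∀ y : Fin n → ℝ,
      (∏ j, Lag (k' j) (y j) * Lag (k'' j) (y j)) * y m * Real.exp (-∑ j, y j)
        = ∏ j, G j (y j) := by
    intro y
    simp only [hG]
    have h1 : (∏ j, if j = m then y j else 1 : ℝ) = y m := by
      rw [Finset.prod_ite_eq' Finset.univ m (fun j => y j)]; simp
    have h2 : (∏ j, Real.exp (-(y j))) = Real.exp (-∑ j, y j) := by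
      rw [← Real.exp_sum]; congr 1; rw [← Finset.sum_neg_distrib]
    rw [← h1, ← h2, mul_assoc, ← Finset.prod_mul_distrib, ← Finset.prod_mul_distrib]
  have key : ∫ y in {y : Fin n → ℝ | ∀ j, 0 ≤ y j},
        (∏ j, Lag (k' j) (y j) * Lag (k'' j) (y j)) * y m * Real.exp (-∑ j, y j)
      = ∏ j, ∫ t in Set.Ioi (0:ℝ), G j t := by
    simp_rw [hpoint]
    rw [← MeasureTheory.integral_indicator hms]
    have hind : (Set.indicator {y : Fin n → ℝ | ∀ j, 0 ≤ y j} (fun y => ∏ j, G j (y j)))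
        = fun y => ∏ j, (Set.Ici (0:ℝ)).indicator (G j) (y j) := by
      funext y
      by_cases h : ∀ j, 0 ≤ y j
      · rw [Set.indicator_of_mem (show y ∈ {y : Fin n → ℝ | ∀ j, 0 ≤ y j} from h)]
        exact Finset.prod_congr rfl fun j _ =>
          (Set.indicator_of_mem (Set.mem_Ici.mpr (h j)) _).symm
      · rw [Set.indicator_of_notMem (show y ∉ {y : Fin n → ℝ | ∀ j, 0 ≤ y j} from h)]
        push_neg at h; obtain ⟨j0, hj0⟩ := h
        have hj0' : y j0 ∉ Set.Ici (0:ℝ) := by simp only [Set.mem_Ici, not_le]; exact hj0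
        rw [Finset.prod_eq_zero (Finset.mem_univ j0)]
        exact Set.indicator_of_notMem hj0' _
    rw [hind, MeasureTheory.integral_fintype_prod_volume_eq_prod
      (fun j => (Set.Ici (0:ℝ)).indicator (G j))]
    refine Finset.prod_congr rfl fun j _ => ?_
    rw [MeasureTheory.integral_indicator measurableSet_Ici,
      ← MeasureTheory.integral_Ici_eq_integral_Ioi]
  rw [key]
  have hvm : ∫ t in Set.Ioi (0:ℝ), G m t
      = if k' m = k'' m then 2*((k' m : ℕ):ℝ)+1
        else if k' m = k'' m + 1 ∨ k'' m = k' m + 1 then -(max (k' m) (k'' m) : ℝ) else 0 := by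
    simp only [hG, if_pos rfl]
    exact lag_one (k' m) (k'' m)
  have hvj : ∀ j, j ≠ m → ∫ t in Set.Ioi (0:ℝ), G j t = if k' j = k'' j then 1 else 0 := by
    intro j hj
    simp only [hG, if_neg hj, one_mul]
    exact lag_zero (k' j) (k'' j)
  rw [← Finset.mul_prod_erase Finset.univ _ (Finset.mem_univ m), hvm]
  by_cases hkk : k' = k''
  · subst hkk
    rw [Finset.prod_congr rfl (fun j hj => hvj j (Finset.ne_of_mem_erase hj))]
    rw [Imf, if_pos rfl]
    simp only [if_pos rfl, ite_true, eq_self_iff_true, Finset.prod_const_one, mul_one]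
    push_cast; ring
  · by_cases hcase : (∀ j, j ≠ m → k' j = k'' j) ∧ (k' m = k'' m + 1 ∨ k'' m = k' m + 1)
    · rw [Finset.prod_congr rfl (fun j hj => hvj j (Finset.ne_of_mem_erase hj))]
      rw [Finset.prod_congr rfl (fun j hj => if_pos (hcase.1 j (Finset.ne_of_mem_erase hj))),
        Finset.prod_const_one, mul_one]
      have hne : k' m ≠ k'' m := by omega
      rw [if_neg hne, if_pos hcase.2, Imf, if_neg hkk, if_pos hcase]
      push_cast
      rfl
    · rw [Imf, if_neg hkk, if_neg hcase, Int.cast_zero]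
      by_cases hoff : ∀ j, j ≠ m → k' j = k'' j
      · have hneq : k' m ≠ k'' m := by
          intro h
          apply hkk; funext j
          by_cases hj : j = m
          · rw [hj]; exact h
          · exact hoff j hj
        have hno : ¬ (k' m = k'' m + 1 ∨ k'' m = k' m + 1) := by tauto
        rw [if_neg hneq, if_neg hno, zero_mul]
      · push_neg at hoff
        obtain ⟨j0, hj0m, hj0⟩ := hoff
        rw [Finset.prod_eq_zero (Finset.mem_erase.mpr ⟨hj0m, Finset.mem_univ j0⟩), mul_zero]
        rw [hvj j0 hj0m, if_neg hj0]
end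

section
/- Let n ≥ 1, N ≥ 0 and m ∈ {1,…,n}. Then n · ∑_{𝐤′, 𝐤″ ∈ ℤ_{≥0}^n, |𝐤′| = |𝐤″| = N} I_m(𝐤′, 𝐤″) = (2N + n) · C(N+n−1, n−1), where the double sum runs over all pairs of multi-indices of nonnegative integers each with coordinate sum N, and C(·,·) denotes the binomial coefficient. (In particular, all off-diagonal terms I_m(𝐤′,𝐤″) with 𝐤′ ≠ 𝐤″ vanish on this set.) -/
/-!
Two multi-indices that differ by one in a single coordinate have different total degrees, so on
the level set `|𝐤| = N` only the diagonal terms `2 k_m + 1` survive. Their sum is computed by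
symmetry: `∑_𝐤 k_m` does not depend on `m`, so `n ∑_𝐤 k_m = ∑_𝐤 |𝐤| = N · #{|𝐤| = N}`, and the
level set has `C(N + n - 1, n - 1)` elements (stars and bars, via `Sym (Fin n) N`).
-/

open Finset

namespace Finset.Nat

theorem card_antidiagonalTuple (n N : ℕ) : #(antidiagonalTuple n N) = (n + N - 1).choose N := by
  rw [← Fintype.card_coe, Fintype.card_congr <|
    (Equiv.subtypeEquivRight fun _ ↦ mem_antidiagonalTuple).trans
      (Sym.equivNatSumOfFintype (Fin n) N).symm, Sym.card_sym_eq_choose, Fintype.card_fin]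

theorem sum_apply_antidiagonalTuple_eq {n N : ℕ} (i j : Fin n) :
    ∑ k ∈ antidiagonalTuple n N, k i = ∑ k ∈ antidiagonalTuple n N, k j := by
  refine sum_equiv ((Equiv.swap i j).arrowCongr (Equiv.refl ℕ)) (fun k ↦ ?_) (fun k _ ↦ ?_)
  · simp only [mem_antidiagonalTuple, Equiv.arrowCongr_apply, Equiv.coe_refl, Equiv.symm_swap,
      Function.comp_apply, id]
    rw [Equiv.sum_comp (Equiv.swap i j) k]
  · simp

theorem card_mul_sum_apply_antidiagonalTuple {n N : ℕ} (i : Fin n) :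
    n * ∑ k ∈ antidiagonalTuple n N, k i = N * #(antidiagonalTuple n N) :=
  calc n * ∑ k ∈ antidiagonalTuple n N, k i
      = ∑ j : Fin n, ∑ k ∈ antidiagonalTuple n N, k j := by
        simp [sum_apply_antidiagonalTuple_eq _ i]
    _ = ∑ k ∈ antidiagonalTuple n N, ∑ j, k j := sum_comm
    _ = ∑ _k ∈ antidiagonalTuple n N, N := sum_congr rfl fun _ hk ↦ mem_antidiagonalTuple.1 hk
    _ = N * #(antidiagonalTuple n N) := by rw [sum_const, smul_eq_mul, mul_comm]

end Finset.Nat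

theorem sum_add_apply_eq_sum_add_apply {n : ℕ} {m : Fin n} {k k' : Fin n → ℕ}
    (h : ∀ j, j ≠ m → k j = k' j) : ∑ j, k j + k' m = ∑ j, k' j + k m := by
  rw [← add_sum_erase _ k (mem_univ m), ← add_sum_erase _ k' (mem_univ m),
    sum_congr rfl fun j hj ↦ h j (ne_of_mem_erase hj)]
  ring

theorem Imf_eq_zero_of_sum_eq {n : ℕ} (m : Fin n) {k k' : Fin n → ℕ} (hne : k ≠ k')
    (hsum : ∑ j, k j = ∑ j, k' j) : Imf m k k' = 0 := by
  rw [Imf, if_neg hne, if_neg]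
  rintro ⟨hoff, hstep⟩
  have := sum_add_apply_eq_sum_add_apply hoff
  omega

theorem sum_Imf_antidiagonalTuple {n N : ℕ} (m : Fin n) {k : Fin n → ℕ}
    (hk : k ∈ Nat.antidiagonalTuple n N) :
    ∑ k' ∈ Nat.antidiagonalTuple n N, Imf m k k' = 2 * (k m : ℤ) + 1 := by
  rw [sum_eq_single_of_mem k hk fun k' hk' hne ↦ Imf_eq_zero_of_sum_eq m hne.symm <|
    (Nat.mem_antidiagonalTuple.1 hk).trans (Nat.mem_antidiagonalTuple.1 hk').symm]
  simp [Imf]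

theorem stmt15_general {n : ℕ} (N : ℕ) (m : Fin n) :
    (n : ℤ) * ∑ k' ∈ Finset.Nat.antidiagonalTuple n N,
        ∑ k'' ∈ Finset.Nat.antidiagonalTuple n N, Imf m k' k''
      = (2 * N + n : ℤ) * (Nat.choose (N + n - 1) (n - 1) : ℤ) := by
  set S := Nat.antidiagonalTuple n N
  have hcoord : (n : ℤ) * ∑ k ∈ S, (k m : ℤ) = N * #S := by
    exact_mod_cast Nat.card_mul_sum_apply_antidiagonalTuple m
  have hcard : #S = (N + n - 1).choose (n - 1) := by
    rw [Nat.card_antidiagonalTuple, add_comm n N]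
    exact Nat.choose_symm_of_eq_add (by have := m.pos; omega)
  calc (n : ℤ) * ∑ k ∈ S, ∑ k' ∈ S, Imf m k k'
      = n * ∑ k ∈ S, (2 * (k m : ℤ) + 1) := by
        rw [sum_congr rfl fun k hk ↦ sum_Imf_antidiagonalTuple m hk]
    _ = 2 * (n * ∑ k ∈ S, (k m : ℤ)) + n * #S := by
        rw [sum_add_distrib, ← mul_sum, sum_const, nsmul_one]
        ring
    _ = (2 * N + n : ℤ) * (Nat.choose (N + n - 1) (n - 1) : ℤ) := by
        rw [hcoord, hcard]
        ring

/-- `n · ∑_{|𝐤′| = |𝐤″| = N} I_m(𝐤′,𝐤″) = (2N + n) · C(N+n−1, n−1)`. -/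
theorem stmt15 {n : ℕ} (hn : 1 ≤ n) (N : ℕ) (m : Fin n) :
    (n : ℤ) * ∑ k' ∈ Finset.Nat.antidiagonalTuple n N,
        ∑ k'' ∈ Finset.Nat.antidiagonalTuple n N, Imf m k' k''
      = (2 * N + n : ℤ) * (Nat.choose (N + n - 1) (n - 1) : ℤ) :=
  stmt15_general N m
end

section
/- Let n ≥ 1, N ≥ 0 and m ∈ {1,…,n}. Then ∑_{𝐤′, 𝐤″ ∈ ℤ_{≥0}^n, |𝐤′| ≤ N, |𝐤″| ≤ N} I_m(𝐤′, 𝐤″) = C(N+n, n), where the double sum runs over all pairs of multi-indices of nonnegative integers each with coordinate sum at most N, and C(·,·) denotes the binomial coefficient. -/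
open Finset

namespace Stmt16Aux

variable {n : ℕ} {m : Fin n} {k k' : Fin n → ℕ}

lemma mem_S {N : ℕ} {x : Fin n → ℕ} :
    x ∈ (Finset.range (N + 1)).biUnion (fun j => Finset.Nat.antidiagonalTuple n j) ↔
      ∑ i, x i ≤ N := by
  simp [Finset.Nat.mem_antidiagonalTuple, Nat.lt_succ_iff]

lemma card_adt (hn : 1 ≤ n) (j : ℕ) :
    (Finset.Nat.antidiagonalTuple n j).card = (j + (n - 1)).choose (n - 1) := by
  rw [← Finset.piAntidiag_univ_fin_eq_antidiagonalTuple j n,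
    ← Finset.map_sym_eq_piAntidiag, Finset.card_map, Finset.sym_univ, Finset.card_univ,
    Sym.card_sym_eq_choose, Fintype.card_fin]
  rw [show n + j - 1 = (n - 1) + j by omega, ← Nat.choose_symm_add, Nat.add_comm]

lemma card_S (hn : 1 ≤ n) (N : ℕ) :
    ((Finset.range (N + 1)).biUnion (fun j => Finset.Nat.antidiagonalTuple n j)).card
      = (N + n).choose n := by
  rw [Finset.card_biUnion]
  · have h : ∀ j ∈ Finset.range (N + 1),
        (Finset.Nat.antidiagonalTuple n j).card = (j + (n - 1)).choose (n - 1) :=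
      fun j _ => card_adt hn j
    rw [Finset.sum_congr rfl h, Nat.sum_range_add_choose]
    congr 1 <;> omega
  · intro x _ y _ hxy
    simp only [Function.onFun]
    rw [Finset.disjoint_left]
    intro a ha ha'
    rw [Finset.Nat.mem_antidiagonalTuple] at ha ha'
    omega

lemma sum_rest : ∑ i, k i = k m + ∑ x ∈ Finset.univ \ {m}, k x := by
  have h := Finset.sum_update_of_mem (Finset.mem_univ m) k (k m)
  rwa [Function.update_eq_self] at h

lemma Imf_self : Imf m k k = 2 * (k m : ℤ) + 1 := by simp [Imf]

lemma Imf_up : Imf m k (Function.update k m (k m + 1)) = -((k m : ℤ) + 1) := by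
  have hne : k ≠ Function.update k m (k m + 1) := by
    intro h
    have := congrFun h m
    simp at this
  rw [Imf, if_neg hne, if_pos]
  · simp
  · refine ⟨fun j hj => by simp [Function.update_of_ne hj], Or.inr (by simp)⟩

lemma Imf_down (h : 1 ≤ k m) : Imf m k (Function.update k m (k m - 1)) = -(k m : ℤ) := by
  have hne : k ≠ Function.update k m (k m - 1) := by
    intro hh
    have := congrFun hh m
    simp at this
    omega
  rw [Imf, if_neg hne, if_pos]
  · simp
  · exact ⟨fun j hj => by simp [Function.update_of_ne hj], Or.inl (by simp; omega)⟩

lemma Imf_eq_zero (h1 : k' ≠ k) (h2 : k' ≠ Function.update k m (k m + 1))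
    (h3 : k' ≠ Function.update k m (k m - 1)) : Imf m k k' = 0 := by
  rw [Imf, if_neg (fun h => h1 h.symm), if_neg]
  rintro ⟨hoff, hcase⟩
  have hk' : k' = Function.update k m (k' m) := by
    funext j
    rcases eq_or_ne j m with rfl | hj
    · simp
    · simp [Function.update_of_ne hj, (hoff j hj).symm]
  rcases hcase with hc | hc
  · have hv : k' m = k m - 1 := by omega
    exact h3 (by rw [hk', hv])
  · have hv : k' m = k m + 1 := by omega
    exact h2 (by rw [hk', hv])

lemma k_ne_u : k ≠ Function.update k m (k m + 1) := by
  intro h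
  have := congrFun h m
  simp at this

lemma Imf_inner_sum (N : ℕ) (hk : ∑ i, k i ≤ N) :
    ∑ k'' ∈ (Finset.range (N + 1)).biUnion (fun j => Finset.Nat.antidiagonalTuple n j),
      Imf m k k'' = if ∑ i, k i = N then (k m : ℤ) + 1 else 0 := by
  set S := (Finset.range (N + 1)).biUnion (fun j => Finset.Nat.antidiagonalTuple n j) with hS
  set u := Function.update k m (k m + 1) with hu
  set d := Function.update k m (k m - 1) with hd
  have hmemS : ∀ x : Fin n → ℕ, x ∈ S ↔ ∑ i, x i ≤ N := fun x => mem_S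
  have hRest : ∑ i, k i = k m + ∑ x ∈ Finset.univ \ {m}, k x := sum_rest
  have hsumu : ∑ i, u i = ∑ i, k i + 1 := by
    rw [hu, Finset.sum_update_of_mem (Finset.mem_univ m)]
    omega
  have hkS : k ∈ S := (hmemS k).2 hk
  have hkneu : k ≠ u := k_ne_u
  have hxu_notS : ∀ x : Fin n → ℕ, ∑ i, k i = N → x ∈ S →
      x ≠ Function.update k m (k m + 1) := by
    intro x hN hxS hxu
    have hle := (hmemS x).1 hxS
    rw [hxu, ← hu, hsumu] at hle
    omega
  by_cases h0 : k m = 0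
  · have hdk : Function.update k m (k m - 1) = k := by
      rw [show k m - 1 = k m by omega, Function.update_eq_self]
    by_cases hN : ∑ i, k i = N
    · rw [if_pos hN]
      have hsub : ({k} : Finset (Fin n → ℕ)) ⊆ S := by simp [hkS]
      rw [← Finset.sum_subset hsub ?_, Finset.sum_singleton, Imf_self, h0]
      · norm_num
      · intro x hxS hx
        simp only [Finset.mem_singleton] at hx
        exact Imf_eq_zero hx (hxu_notS x hN hxS) (fun h => hx (h.trans hdk))
    · rw [if_neg hN]
      have huS : u ∈ S := by rw [hmemS, hsumu]; omega
      have hsub : ({k, u} : Finset (Fin n → ℕ)) ⊆ S := by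
        intro x hx
        simp only [Finset.mem_insert, Finset.mem_singleton] at hx
        rcases hx with rfl | rfl
        exacts [hkS, huS]
      rw [← Finset.sum_subset hsub ?_]
      · rw [Finset.sum_insert (by simp [hkneu]), Finset.sum_singleton, Imf_self, hu, Imf_up, h0]
        norm_num
      · intro x hxS hx
        simp only [Finset.mem_insert, Finset.mem_singleton, not_or] at hx
        exact Imf_eq_zero hx.1 (fun h => hx.2 (h.trans hu.symm)) (fun h => hx.1 (h.trans hdk))
  · have hsumd : ∑ i, d i = ∑ i, k i - 1 := by
      rw [hd, Finset.sum_update_of_mem (Finset.mem_univ m)]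
      omega
    have hdS : d ∈ S := by rw [hmemS, hsumd]; omega
    have hkned : k ≠ d := by
      intro h
      have := congrFun h m
      rw [hd, Function.update_self] at this
      omega
    have huned : u ≠ d := by
      intro h
      have := congrFun h m
      rw [hu, hd, Function.update_self, Function.update_self] at this
      omega
    by_cases hN : ∑ i, k i = N
    · rw [if_pos hN]
      have hsub : ({k, d} : Finset (Fin n → ℕ)) ⊆ S := by
        intro x hx
        simp only [Finset.mem_insert, Finset.mem_singleton] at hx
        rcases hx with rfl | rfl
        exacts [hkS, hdS]
      rw [← Finset.sum_subset hsub ?_]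
      · rw [Finset.sum_insert (by simp [hkned]), Finset.sum_singleton, Imf_self, hd,
          Imf_down (by omega)]
        ring
      · intro x hxS hx
        simp only [Finset.mem_insert, Finset.mem_singleton, not_or] at hx
        exact Imf_eq_zero hx.1 (hxu_notS x hN hxS) (fun h => hx.2 (h.trans hd.symm))
    · rw [if_neg hN]
      have huS : u ∈ S := by rw [hmemS, hsumu]; omega
      have hsub : ({k, u, d} : Finset (Fin n → ℕ)) ⊆ S := by
        intro x hx
        simp only [Finset.mem_insert, Finset.mem_singleton] at hx
        rcases hx with rfl | rfl | rfl
        exacts [hkS, huS, hdS]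
      rw [← Finset.sum_subset hsub ?_]
      · rw [Finset.sum_insert (by simp [hkneu, hkned]),
          Finset.sum_insert (by simp [huned]), Finset.sum_singleton, Imf_self, hu, Imf_up,
          hd, Imf_down (by omega)]
        ring
      · intro x hxS hx
        simp only [Finset.mem_insert, Finset.mem_singleton, not_or] at hx
        exact Imf_eq_zero hx.1 (fun h => hx.2.1 (h.trans hu.symm))
          (fun h => hx.2.2 (h.trans hd.symm))

lemma fiber_eq (N : ℕ) (hk : ∑ i, k i = N) :
    ((Finset.range (N + 1)).biUnion (fun j => Finset.Nat.antidiagonalTuple n j)).filter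
        (fun k' => Function.update k' m (k' m + (N - ∑ i, k' i)) = k)
      = (Finset.range (k m + 1)).image (fun j => Function.update k m j) := by
  ext x
  simp only [Finset.mem_filter, mem_S, Finset.mem_image, Finset.mem_range]
  constructor
  · rintro ⟨hxle, hφ⟩
    refine ⟨x m, ?_, ?_⟩
    · have := congrFun hφ m
      rw [Function.update_self] at this
      omega
    · funext j
      rcases eq_or_ne j m with rfl | hj
      · simp
      · have := congrFun hφ j
        rw [Function.update_of_ne hj] at this
        rw [Function.update_of_ne hj, ← this]
  · rintro ⟨j, hj, rfl⟩
    have hR : ∑ i, k i = k m + ∑ x ∈ Finset.univ \ {m}, k x := sum_rest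
    have hsx : ∑ i, Function.update k m j i = ∑ i, k i - k m + j := by
      rw [Finset.sum_update_of_mem (Finset.mem_univ m)]
      omega
    refine ⟨by omega, ?_⟩
    rw [Function.update_idem, Function.update_self, hsx]
    have hv : j + (N - (∑ i, k i - k m + j)) = k m := by omega
    rw [hv, Function.update_eq_self]

lemma card_S_eq_sum (N : ℕ) :
    ((Finset.range (N + 1)).biUnion (fun j => Finset.Nat.antidiagonalTuple n j)).card
      = ∑ k ∈ Finset.Nat.antidiagonalTuple n N, (k m + 1) := by
  rw [Finset.card_eq_sum_card_fiberwise
    (f := fun k' => Function.update k' m (k' m + (N - ∑ i, k' i)))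
    (t := Finset.Nat.antidiagonalTuple n N) ?_]
  · refine Finset.sum_congr rfl fun k hk => ?_
    rw [Finset.Nat.mem_antidiagonalTuple] at hk
    rw [fiber_eq N hk, Finset.card_image_of_injective _ ?_, Finset.card_range]
    intro a b h
    have := congrFun h m
    simpa using this
  · intro x hx
    simp only [Finset.mem_coe] at hx ⊢
    rw [mem_S] at hx
    rw [Finset.Nat.mem_antidiagonalTuple, Finset.sum_update_of_mem (Finset.mem_univ m)]
    have hR : ∑ i, x i = x m + ∑ j ∈ Finset.univ \ {m}, x j := sum_rest
    omega

end Stmt16Aux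

/-- `∑_{|𝐤′| ≤ N, |𝐤″| ≤ N} I_m(𝐤′,𝐤″) = C(N+n, n)`. -/
theorem stmt16 {n : ℕ} (hn : 1 ≤ n) (N : ℕ) (m : Fin n) :
    ∑ k' ∈ (Finset.range (N + 1)).biUnion (fun j => Finset.Nat.antidiagonalTuple n j),
        ∑ k'' ∈ (Finset.range (N + 1)).biUnion (fun j => Finset.Nat.antidiagonalTuple n j),
          Imf m k' k''
      = (Nat.choose (N + n) n : ℤ) := by
  rw [Finset.sum_congr rfl
    (fun k hk => Stmt16Aux.Imf_inner_sum N (Stmt16Aux.mem_S.1 hk)), ← Finset.sum_filter]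
  have hfilter : ((Finset.range (N + 1)).biUnion
      (fun j => Finset.Nat.antidiagonalTuple n j)).filter (fun k => ∑ i, k i = N)
        = Finset.Nat.antidiagonalTuple n N := by
    ext x
    simp only [Finset.mem_filter, Stmt16Aux.mem_S, Finset.Nat.mem_antidiagonalTuple]
    omega
  rw [hfilter, ← Stmt16Aux.card_S hn N, Stmt16Aux.card_S_eq_sum (m := m) N]
  push_cast
  ring
end
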